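/- arXiv:2011.00364 — 5 statements merged into one kernel-verified Lean document; each statement's English description precedes it below -/
import Mathlib

section
/- For any L > 0, κ > 0, q ≥ κ, t ≥ 0, and δ > 0, the inequality (L/κ)·t^κ ≤ (Λ/q)·t^q + δ/2 holds, where Λ = ((2(q-κ))/(δ·q·κ))^((q-κ)/κ) · L^(q/κ). -/
/-!
Substituting `s = t ^ κ` turns the claim into `(L / κ) s ≤ (Λ / κ) s ^ p / p + δ / 2` with
`p = q / κ ≥ 1`. For `p > 1` this is Young's inequality `x y ≤ x ^ p / p + y ^ p' / p'` applied
to `x y = (L / κ) s`, with `y` chosen so that `y ^ p' / p' = δ / 2`; the constant `Λ` is exactly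
what this choice of `y` produces. For `p = 1` both sides agree up to `δ / 2`.
-/

open Real

theorem le_rpow_div_add_of_holderConjugate {p p' u K : ℝ} (hp : p.HolderConjugate p')
    (hu : 0 ≤ u) (hK : 0 < K) :
    u ≤ u ^ p / (p * (p' * K) ^ (p - 1)) + K := by
  have hpK : 0 < p' * K := mul_pos hp.symm.pos hK
  set y := (p' * K) ^ p'⁻¹ with hy
  have hy0 : 0 < y := rpow_pos_of_pos hpK _
  have hyp' : y ^ p' = p' * K := by
    rw [hy, ← rpow_mul hpK.le, inv_mul_cancel₀ hp.symm.ne_zero, rpow_one]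
  have hyp : y ^ p = (p' * K) ^ (p - 1) := by
    rw [hy, ← rpow_mul hpK.le, ← div_eq_inv_mul, hp.div_conj_eq_sub_one]
  calc u = u / y * y := (div_mul_cancel₀ u hy0.ne').symm
    _ ≤ (u / y) ^ p / p + y ^ p' / p' :=
        young_inequality_of_nonneg (div_nonneg hu hy0.le) hy0.le hp
    _ = u ^ p / (p * (p' * K) ^ (p - 1)) + K := by
        rw [div_rpow hu hy0.le, hyp, hyp', mul_div_cancel_left₀ K hp.symm.ne_zero, div_div,
          mul_comm]

theorem Real.holderConjugate_div_div_sub {κ q : ℝ} (hκ : 0 < κ) (hlt : κ < q) :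
    (q / κ).HolderConjugate (q / (q - κ)) := by
  have hq : 0 < q := hκ.trans hlt
  simpa only [one_div_div] using
    holderConjugate_one_div (div_pos hκ hq) (div_pos (sub_pos.2 hlt) hq) (by field_simp; ring)

theorem young_coefficient_eq {L κ q δ : ℝ} (hL : 0 < L) (hκ : 0 < κ) (hlt : κ < q)
    (hδ : 0 < δ) :
    (L / κ) ^ (q / κ) / (q / κ * (q / (q - κ) * (δ / 2)) ^ (q / κ - 1)) =
      ((2 * (q - κ)) / (δ * q * κ)) ^ ((q - κ) / κ) * L ^ (q / κ) / q := by
  have hq : 0 < q := hκ.trans hlt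
  have hqκ : 0 < q - κ := sub_pos.2 hlt
  set A := 2 * (q - κ) / (δ * q) with hA
  have hA0 : 0 < A := by positivity
  have hexp : q / κ - 1 = (q - κ) / κ := by field_simp
  have hκpow : κ ^ (q / κ) = κ * κ ^ ((q - κ) / κ) := by
    rw [← rpow_one_add' hκ.le (by positivity), add_div' _ _ _ hκ.ne', one_mul, add_sub_cancel]
  rw [show q / (q - κ) * (δ / 2) = A⁻¹ by rw [hA]; field_simp,
    show 2 * (q - κ) / (δ * q * κ) = A / κ by rw [hA, div_div],
    hexp, div_rpow hL.le hκ.le, hκpow, inv_rpow hA0.le, div_rpow hA0.le hκ.le]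
  field_simp

theorem stmt_0 (L κ q t δ : ℝ) (hL : 0 < L) (hκ : 0 < κ) (hq : κ ≤ q)
    (ht : 0 ≤ t) (hδ : 0 < δ) :
    L / κ * t ^ κ ≤
      ((2 * (q - κ)) / (δ * q * κ)) ^ ((q - κ) / κ) * L ^ (q / κ) / q * t ^ q + δ / 2 := by
  rcases hq.eq_or_lt with rfl | hlt
  · simp only [sub_self, zero_div, rpow_zero, one_mul, div_self hκ.ne', rpow_one]
    linarith
  have htq : (t ^ κ) ^ (q / κ) = t ^ q := by
    rw [← rpow_mul ht, mul_div_cancel₀ q hκ.ne']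
  calc L / κ * t ^ κ
      ≤ (L / κ * t ^ κ) ^ (q / κ) / (q / κ * (q / (q - κ) * (δ / 2)) ^ (q / κ - 1)) + δ / 2 :=
        le_rpow_div_add_of_holderConjugate (holderConjugate_div_div_sub hκ hlt)
          (by positivity) (half_pos hδ)
    _ = _ := by
        rw [mul_rpow (div_pos hL hκ).le (rpow_nonneg ht κ), htq, mul_div_right_comm,
          young_coefficient_eq hL hκ hlt hδ]
end

section
/- Let F: ℝ^d → ℝ^d be L-Lipschitz with respect to the Euclidean norm and suppose there exists u* ∈ ℝ^d with F(u*) = 0 such that for all u, ⟨F(u), u - u*⟩ ≥ -(ρ/2)‖F(u)‖², with 0 ≤ ρ < 1/(4L). Let the EG+ iterates be ū_k = u_k - (a_k/β)F(u_k), u_{k+1} = u_k - a_k F(ū_k) with β = 1/2, a_k = 1/(2L). Then for every k ≥ 0: (1/2)‖u* - u_{k+1}‖² - (1/2)‖u* - u_k‖² ≤ -(1/(4L))(1/(4L) - ρ)‖F(ū_k)‖². -/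
/-!
Write `g = F ū` and `f = F u` for the two operator evaluations of one EG+ step. Since
`ū - u = -(1/L) f`, Lipschitz continuity gives `‖g - f‖ ≤ ‖f‖`, i.e. `⟪g, f⟫ ≥ ½‖g‖²`. Expanding the
square of the update `u⁺ = u - (1/(2L)) g` and splitting `u - u* = (ū - u*) + (1/L) f`, the weak MVI
bounds `⟪g, ū - u*⟫` from below by `-(ρ/2)‖g‖²`, which leaves
`½‖u* - u⁺‖² - ½‖u* - u‖² ≤ -(1/(4L))(1/(2L) - ρ)‖g‖²`, stronger than the claimed bound.
-/

open scoped InnerProductSpace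

section Extragradient

variable {E : Type*} [NormedAddCommGroup E] [InnerProductSpace ℝ E]

lemma half_norm_sq_le_inner_of_norm_sub_le {f g : E} (h : ‖g - f‖ ≤ ‖f‖) :
    (1 / 2) * ‖g‖ ^ 2 ≤ ⟪g, f⟫_ℝ := by
  have hsq : ‖g - f‖ ^ 2 ≤ ‖f‖ ^ 2 := pow_le_pow_left₀ (norm_nonneg _) h 2
  rw [norm_sub_sq_real] at hsq
  linarith

lemma half_norm_sq_sub_smul_sub (x y g : E) (a : ℝ) :
    (1 / 2) * ‖y - (x - a • g)‖ ^ 2 - (1 / 2) * ‖y - x‖ ^ 2 =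
      -a * ⟪g, x - y⟫_ℝ + a ^ 2 / 2 * ‖g‖ ^ 2 := by
  have hsplit : y - (x - a • g) = (y - x) + a • g := by abel
  have hswap : ⟪y - x, g⟫_ℝ = -⟪g, x - y⟫_ℝ := by
    rw [real_inner_comm, ← inner_neg_right, neg_sub]
  rw [hsplit, norm_add_sq_real, inner_smul_right, hswap, norm_smul, mul_pow, Real.norm_eq_abs,
    sq_abs]
  ring

variable {F : E → E} {L : ℝ}

lemma norm_sub_le_of_extrapolation (hL : 0 < L)
    (hLip : ∀ u v, ‖F u - F v‖ ≤ L * ‖u - v‖) {x xbar : E} (hxbar : xbar = x - (1 / L) • F x) :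
    ‖F xbar - F x‖ ≤ ‖F x‖ := by
  calc ‖F xbar - F x‖ ≤ L * ‖xbar - x‖ := hLip xbar x
    _ = L * ((1 / L) * ‖F x‖) := by
      rw [hxbar, sub_sub_cancel_left, norm_neg, norm_smul, Real.norm_of_nonneg (by positivity)]
    _ = ‖F x‖ := by field_simp

theorem extragradient_plus_descent (hL : 0 < L)
    (hLip : ∀ u v, ‖F u - F v‖ ≤ L * ‖u - v‖) {ρ : ℝ} {xstar : E}
    (hweak : ∀ u, ⟪F u, u - xstar⟫_ℝ ≥ -(ρ / 2) * ‖F u‖ ^ 2)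
    {x xbar : E} (hxbar : xbar = x - (1 / L) • F x) :
    (1 / 2) * ‖xstar - (x - (1 / (2 * L)) • F xbar)‖ ^ 2 - (1 / 2) * ‖xstar - x‖ ^ 2 ≤
      -(1 / (4 * L)) * (1 / (2 * L) - ρ) * ‖F xbar‖ ^ 2 := by
  have hcorr : (1 / 2) * ‖F xbar‖ ^ 2 ≤ ⟪F xbar, F x⟫_ℝ :=
    half_norm_sq_le_inner_of_norm_sub_le (norm_sub_le_of_extrapolation hL hLip hxbar)
  have hsplit : ⟪F xbar, x - xstar⟫_ℝ = ⟪F xbar, xbar - xstar⟫_ℝ + (1 / L) * ⟪F xbar, F x⟫_ℝ := by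
    rw [← real_inner_smul_right, ← inner_add_right, hxbar]
    congr 1
    abel
  have hlower : (1 / (2 * L) - ρ / 2) * ‖F xbar‖ ^ 2 ≤ ⟪F xbar, x - xstar⟫_ℝ := by
    have hscaled := mul_le_mul_of_nonneg_left hcorr (one_div_nonneg.mpr hL.le)
    have hhalf : 1 / (2 * L) = 1 / L * (1 / 2) := by field_simp
    rw [hsplit, hhalf]
    linarith [hweak xbar]
  have hquarter : 1 / (4 * L) = 1 / (2 * L) / 2 := by field_simp; norm_num
  rw [half_norm_sq_sub_smul_sub, hquarter]
  have hstep : 0 ≤ 1 / (2 * L) := by positivity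
  linarith [mul_le_mul_of_nonneg_left hlower hstep]

end Extragradient

theorem stmt_2_general {d : ℕ} (L ρ : ℝ) (hL : 0 < L)
    (F : EuclideanSpace ℝ (Fin d) → EuclideanSpace ℝ (Fin d))
    (hLip : ∀ u v, ‖F u - F v‖ ≤ L * ‖u - v‖)
    (ustar : EuclideanSpace ℝ (Fin d))
    (hweak : ∀ u, (inner ℝ (F u) (u - ustar) : ℝ) ≥ -(ρ / 2) * ‖F u‖ ^ 2)
    (u ubar : ℕ → EuclideanSpace ℝ (Fin d))
    (hubar : ∀ k, ubar k = u k - (1 / L) • F (u k))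
    (hnext : ∀ k, u (k + 1) = u k - (1 / (2 * L)) • F (ubar k)) (k : ℕ) :
    (1 / 2) * ‖ustar - u (k + 1)‖ ^ 2 - (1 / 2) * ‖ustar - u k‖ ^ 2 ≤
      -(1 / (4 * L)) * (1 / (4 * L) - ρ) * ‖F (ubar k)‖ ^ 2 := by
  have hdescent := extragradient_plus_descent hL hLip hweak (hubar k)
  rw [← hnext k] at hdescent
  have hweaker : -(1 / (4 * L)) * (1 / (2 * L) - ρ) ≤ -(1 / (4 * L)) * (1 / (4 * L) - ρ) := by
    have hsteps : 1 / (4 * L) ≤ 1 / (2 * L) := by gcongr; norm_num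
    nlinarith [one_div_pos.mpr (show 0 < 4 * L by positivity)]
  exact hdescent.trans (mul_le_mul_of_nonneg_right hweaker (sq_nonneg _))

theorem stmt_2 {d : ℕ} (L ρ : ℝ) (hL : 0 < L)
    (F : EuclideanSpace ℝ (Fin d) → EuclideanSpace ℝ (Fin d))
    (hLip : ∀ u v, ‖F u - F v‖ ≤ L * ‖u - v‖)
    (ustar : EuclideanSpace ℝ (Fin d)) (hzero : F ustar = 0)
    (hρ0 : 0 ≤ ρ) (hρ : ρ < 1 / (4 * L))
    (hweak : ∀ u, (inner ℝ (F u) (u - ustar) : ℝ) ≥ -(ρ / 2) * ‖F u‖ ^ 2)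
    (u ubar : ℕ → EuclideanSpace ℝ (Fin d))
    (hubar : ∀ k, ubar k = u k - (1 / L) • F (u k))
    (hnext : ∀ k, u (k + 1) = u k - (1 / (2 * L)) • F (ubar k)) (k : ℕ) :
    (1 / 2) * ‖ustar - u (k + 1)‖ ^ 2 - (1 / 2) * ‖ustar - u k‖ ^ 2 ≤
      -(1 / (4 * L)) * (1 / (4 * L) - ρ) * ‖F (ubar k)‖ ^ 2 :=
  stmt_2_general L ρ hL F hLip ustar hweak u ubar hubar hnext k
end

section
/- Under the assumptions of the EG+ convergence theorem (F L-Lipschitz on ℝ^d with Euclidean norm, weak MVI assumption at a zero u* of F with parameter ρ ∈ [0, 1/(4L)), iterates with β = 1/2 and a_k = 1/(2L)), for every k ≥ 1: (1/(k+1))·Σ_{i=0}^{k} ‖F(ū_i)‖² ≤ 2L‖u₀ - u*‖² / ((k+1)(1/(4L) - ρ)). -/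
open scoped InnerProductSpace

/-!
With `x̄ = x - (1/L) F x`, Lipschitz continuity gives `‖F x̄ - F x‖ ≤ ‖F x‖`, hence
`⟪F x̄, F x⟫ ≥ ‖F x̄‖² / 2`. Combined with the weak MVI inequality at `x̄`, expanding
`‖x - (1/(2L)) F x̄ - u*‖²` shows that each EG+ step decreases the squared distance to `u*`
by at least `(1/(2L)) (1/(2L) - ρ) ‖F x̄‖²`. Telescoping bounds the sum of the `‖F ūᵢ‖²`.
-/

section EGPlus

variable {E : Type*} [NormedAddCommGroup E] [InnerProductSpace ℝ E]

lemma half_norm_sq_le_real_inner_of_norm_sub_le {f g : E} (h : ‖g - f‖ ≤ ‖f‖) :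
    ‖g‖ ^ 2 / 2 ≤ ⟪g, f⟫_ℝ := by
  have hsq : ‖g - f‖ ^ 2 ≤ ‖f‖ ^ 2 := pow_le_pow_left₀ (norm_nonneg _) h 2
  rw [norm_sub_sq_real] at hsq
  linarith

variable {F : E → E} {L ρ : ℝ} {ustar : E}

lemma norm_sub_extrapolation_le (hL : 0 < L)
    (hLip : ∀ u v, ‖F u - F v‖ ≤ L * ‖u - v‖) (x : E) :
    ‖F (x - (1 / L) • F x) - F x‖ ≤ ‖F x‖ := by
  calc ‖F (x - (1 / L) • F x) - F x‖ ≤ L * ‖x - (1 / L) • F x - x‖ := hLip _ _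
    _ = ‖F x‖ := by
      rw [sub_sub_cancel_left, norm_neg, norm_smul, Real.norm_of_nonneg (by positivity)]
      field_simp

lemma egPlus_step_descent (hL : 0 < L)
    (hLip : ∀ u v, ‖F u - F v‖ ≤ L * ‖u - v‖)
    (hweak : ∀ u, (inner ℝ (F u) (u - ustar) : ℝ) ≥ -(ρ / 2) * ‖F u‖ ^ 2) (x : E) :
    ‖x - (1 / (2 * L)) • F (x - (1 / L) • F x) - ustar‖ ^ 2
        + 1 / (2 * L) * (1 / (2 * L) - ρ) * ‖F (x - (1 / L) • F x)‖ ^ 2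
      ≤ ‖x - ustar‖ ^ 2 := by
  set xbar := x - (1 / L) • F x
  set g := F xbar
  have hgf : ‖g‖ ^ 2 / 2 ≤ ⟪g, F x⟫_ℝ :=
    half_norm_sq_le_real_inner_of_norm_sub_le (norm_sub_extrapolation_le hL hLip x)
  have hmvi : -(ρ / 2) * ‖g‖ ^ 2 ≤ ⟪g, xbar - ustar⟫_ℝ := hweak xbar
  have hsplit : ⟪g, x - ustar⟫_ℝ = ⟪g, xbar - ustar⟫_ℝ + 1 / L * ⟪g, F x⟫_ℝ := by
    rw [← real_inner_smul_right, ← inner_add_right]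
    congr 1
    simp only [xbar]
    abel
  have hexpand : ‖x - (1 / (2 * L)) • g - ustar‖ ^ 2
      = ‖x - ustar‖ ^ 2 - 1 / L * ⟪g, x - ustar⟫_ℝ + 1 / (4 * L ^ 2) * ‖g‖ ^ 2 := by
    rw [sub_right_comm, norm_sub_sq_real, real_inner_smul_right, norm_smul,
      Real.norm_of_nonneg (by positivity), real_inner_comm]
    field_simp
    ring
  have hLinv : 0 < 1 / L := by positivity
  rw [hexpand, hsplit]
  have := mul_le_mul_of_nonneg_left hgf hLinv.le
  have := mul_le_mul_of_nonneg_left hmvi hLinv.le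
  field_simp
  nlinarith

end EGPlus

lemma mul_sum_range_le_sub_of_descent {d s : ℕ → ℝ} {c : ℝ}
    (h : ∀ i, d (i + 1) + c * s i ≤ d i) (n : ℕ) :
    c * ∑ i ∈ Finset.range n, s i ≤ d 0 - d n := by
  rw [Finset.mul_sum, ← Finset.sum_range_sub']
  exact Finset.sum_le_sum fun i _ => by linarith [h i]

theorem stmt_3_general {d : ℕ} (L ρ : ℝ) (hL : 0 < L)
    (F : EuclideanSpace ℝ (Fin d) → EuclideanSpace ℝ (Fin d))
    (hLip : ∀ u v, ‖F u - F v‖ ≤ L * ‖u - v‖)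
    (ustar : EuclideanSpace ℝ (Fin d))
    (hρ : ρ < 1 / (4 * L))
    (hweak : ∀ u, (inner ℝ (F u) (u - ustar) : ℝ) ≥ -(ρ / 2) * ‖F u‖ ^ 2)
    (u ubar : ℕ → EuclideanSpace ℝ (Fin d))
    (hubar : ∀ k, ubar k = u k - (1 / L) • F (u k))
    (hnext : ∀ k, u (k + 1) = u k - (1 / (2 * L)) • F (ubar k))
    (k : ℕ) :
    (1 / ((k : ℝ) + 1)) * ∑ i ∈ Finset.range (k + 1), ‖F (ubar i)‖ ^ 2 ≤
      2 * L * ‖u 0 - ustar‖ ^ 2 / (((k : ℝ) + 1) * (1 / (4 * L) - ρ)) := by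
  have hstep : ∀ i, ‖u (i + 1) - ustar‖ ^ 2
      + 1 / (2 * L) * (1 / (2 * L) - ρ) * ‖F (ubar i)‖ ^ 2 ≤ ‖u i - ustar‖ ^ 2 := fun i => by
    rw [hnext, hubar]
    exact egPlus_step_descent hL hLip hweak (u i)
  have hdescent := mul_sum_range_le_sub_of_descent (d := fun i => ‖u i - ustar‖ ^ 2)
    (s := fun i => ‖F (ubar i)‖ ^ 2) hstep (k + 1)
  set S := ∑ i ∈ Finset.range (k + 1), ‖F (ubar i)‖ ^ 2
  have hS : 0 ≤ S := Finset.sum_nonneg fun i _ => by positivity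
  have hgap : 0 < 1 / (4 * L) - ρ := sub_pos.mpr hρ
  -- the descent step gives the sharper gap `1/(2L) - ρ`; the claim only needs `1/(4L) - ρ`
  have hbound : 1 / (2 * L) * (1 / (4 * L) - ρ) * S ≤ ‖u 0 - ustar‖ ^ 2 := by
    have hle : 1 / (2 * L) * (1 / (4 * L) - ρ) ≤ 1 / (2 * L) * (1 / (2 * L) - ρ) := by
      gcongr
      linarith
    nlinarith [mul_le_mul_of_nonneg_right hle hS, norm_nonneg (u (k + 1) - ustar)]
  rw [div_mul_eq_mul_div, one_mul, div_le_div_iff₀ (by positivity) (by positivity)]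
  field_simp at hbound ⊢
  nlinarith

theorem stmt_3 {d : ℕ} (L ρ : ℝ) (hL : 0 < L)
    (F : EuclideanSpace ℝ (Fin d) → EuclideanSpace ℝ (Fin d))
    (hLip : ∀ u v, ‖F u - F v‖ ≤ L * ‖u - v‖)
    (ustar : EuclideanSpace ℝ (Fin d)) (hzero : F ustar = 0)
    (hρ0 : 0 ≤ ρ) (hρ : ρ < 1 / (4 * L))
    (hweak : ∀ u, (inner ℝ (F u) (u - ustar) : ℝ) ≥ -(ρ / 2) * ‖F u‖ ^ 2)
    (u ubar : ℕ → EuclideanSpace ℝ (Fin d))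
    (hubar : ∀ k, ubar k = u k - (1 / L) • F (u k))
    (hnext : ∀ k, u (k + 1) = u k - (1 / (2 * L)) • F (ubar k))
    (k : ℕ) (hk : 1 ≤ k) :
    (1 / ((k : ℝ) + 1)) * ∑ i ∈ Finset.range (k + 1), ‖F (ubar i)‖ ^ 2 ≤
      2 * L * ‖u 0 - ustar‖ ^ 2 / (((k : ℝ) + 1) * (1 / (4 * L) - ρ)) :=
  stmt_3_general L ρ hL F hLip ustar hρ hweak u ubar hubar hnext k
end

section
/- Under the assumptions of the EG+ convergence theorem, min over 0 ≤ i ≤ k of ‖F(ū_i)‖² ≤ 2L‖u₀ - u*‖² / ((k+1)(1/(4L) - ρ)). In particular ‖F(ū_i)‖ → 0 as i → ∞. -/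
/-!
Each EG+ step is a Fejér-type descent: the extrapolation step `1/L` together with Lipschitz
continuity gives `‖F ū‖² ≤ 2⟪F ū, F u⟫`, and combined with the weak Minty inequality at `ū`
this yields `‖u⁺ - u*‖² ≤ ‖u - u*‖² - a (1/L - ρ - a) ‖F ū‖²` for the update step `a`.
With `a = 1/(2L)` the decrease is at least `(1/(2L)) (1/(4L) - ρ) ‖F ū‖²`; telescoping bounds
the partial sums of `‖F ūᵢ‖²` by `‖u₀ - u*‖²`, so the smallest term is at most the average and
the series converges.
-/

open scoped InnerProductSpace
open Finset Filter Topology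

section Descent

variable {x y : ℕ → ℝ} {c : ℝ}

theorem mul_sum_range_le_of_descent (hx : ∀ k, 0 ≤ x k)
    (hdesc : ∀ k, x (k + 1) ≤ x k - c * y k) (n : ℕ) :
    c * ∑ i ∈ range n, y i ≤ x 0 := by
  calc c * ∑ i ∈ range n, y i = ∑ i ∈ range n, c * y i := mul_sum _ _ _
    _ ≤ ∑ i ∈ range n, (x i - x (i + 1)) := sum_le_sum fun i _ => by linarith [hdesc i]
    _ = x 0 - x n := sum_range_sub' x n
    _ ≤ x 0 := by linarith [hx n]

theorem exists_le_div_of_descent (hc : 0 < c) (hx : ∀ k, 0 ≤ x k)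
    (hdesc : ∀ k, x (k + 1) ≤ x k - c * y k) (k : ℕ) :
    ∃ i ≤ k, y i ≤ x 0 / ((k + 1) * c) := by
  have hsum := mul_sum_range_le_of_descent hx hdesc (k + 1)
  have hle : ∑ i ∈ range (k + 1), y i ≤ ∑ _i ∈ range (k + 1), x 0 / ((k + 1) * c) := by
    rw [sum_const, card_range, nsmul_eq_mul, Nat.cast_succ, mul_div_assoc',
      le_div_iff₀ (by positivity)]
    nlinarith [mul_le_mul_of_nonneg_left hsum (by positivity : (0 : ℝ) ≤ k + 1)]
  obtain ⟨i, hi, hyi⟩ := exists_le_of_sum_le nonempty_range_add_one hle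
  exact ⟨i, Nat.lt_succ_iff.mp (mem_range.mp hi), hyi⟩

theorem summable_of_descent (hc : 0 < c) (hx : ∀ k, 0 ≤ x k) (hy : ∀ k, 0 ≤ y k)
    (hdesc : ∀ k, x (k + 1) ≤ x k - c * y k) : Summable y :=
  summable_of_sum_range_le (c := x 0 / c) hy fun n => by
    rw [le_div_iff₀ hc, mul_comm]
    exact mul_sum_range_le_of_descent hx hdesc n

end Descent

theorem tendsto_norm_atTop_zero_of_summable_sq {E : Type*} [SeminormedAddCommGroup E]
    {v : ℕ → E} (h : Summable fun i => ‖v i‖ ^ 2) :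
    Tendsto (fun i => ‖v i‖) atTop (𝓝 0) := by
  simpa [Real.sqrt_sq (norm_nonneg _)] using h.tendsto_atTop_zero.sqrt

section ExtragradientPlus

variable {E : Type*} [NormedAddCommGroup E] [InnerProductSpace ℝ E]
  {F : E → E} {L ρ : ℝ} {ustar : E}

theorem norm_sq_le_two_inner_of_norm_sub_le {g f : E} (h : ‖g - f‖ ≤ ‖f‖) :
    ‖g‖ ^ 2 ≤ 2 * ⟪g, f⟫_ℝ := by
  nlinarith [norm_sub_sq_real g f, norm_nonneg (g - f), norm_nonneg f]

theorem norm_sq_le_two_inner_extrapolation (hL : 0 < L)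
    (hLip : ∀ u v, ‖F u - F v‖ ≤ L * ‖u - v‖) (u : E) :
    ‖F (u - (1 / L) • F u)‖ ^ 2 ≤ 2 * ⟪F (u - (1 / L) • F u), F u⟫_ℝ := by
  apply norm_sq_le_two_inner_of_norm_sub_le
  calc ‖F (u - (1 / L) • F u) - F u‖ ≤ L * ‖u - (1 / L) • F u - u‖ := hLip _ _
    _ = ‖F u‖ := by
      rw [sub_sub_cancel_left, norm_neg, norm_smul, Real.norm_of_nonneg (by positivity)]
      field_simp

theorem norm_sub_sq_le_of_extragradient_step (hL : 0 < L)
    (hLip : ∀ u v, ‖F u - F v‖ ≤ L * ‖u - v‖)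
    (hweak : ∀ u, ⟪F u, u - ustar⟫_ℝ ≥ -(ρ / 2) * ‖F u‖ ^ 2)
    {a : ℝ} (ha : 0 ≤ a) (u : E) :
    ‖u - a • F (u - (1 / L) • F u) - ustar‖ ^ 2
      ≤ ‖u - ustar‖ ^ 2 - a * (1 / L - ρ - a) * ‖F (u - (1 / L) • F u)‖ ^ 2 := by
  have hext := mul_le_mul_of_nonneg_left (norm_sq_le_two_inner_extrapolation hL hLip u)
    (by positivity : 0 ≤ 1 / L)
  have hw := hweak (u - (1 / L) • F u)
  set ubar := u - (1 / L) • F u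
  set g := F ubar
  have hsplit : u - ustar = (ubar - ustar) + (1 / L) • F u := by
    simp only [ubar]; abel
  have hinner : (1 / L - ρ) / 2 * ‖g‖ ^ 2 ≤ ⟪u - ustar, g⟫_ℝ := by
    rw [hsplit, inner_add_left, real_inner_smul_left, real_inner_comm, real_inner_comm g (F u)]
    linear_combination hw + hext / 2
  calc ‖u - a • g - ustar‖ ^ 2 = ‖(u - ustar) - a • g‖ ^ 2 := by rw [sub_right_comm]
    _ = ‖u - ustar‖ ^ 2 - 2 * a * ⟪u - ustar, g⟫_ℝ + a ^ 2 * ‖g‖ ^ 2 := by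
      rw [norm_sub_sq_real, real_inner_smul_right, norm_smul, mul_pow,
        Real.norm_of_nonneg ha]
      ring
    _ ≤ ‖u - ustar‖ ^ 2 - a * (1 / L - ρ - a) * ‖g‖ ^ 2 := by
      nlinarith [mul_le_mul_of_nonneg_left hinner ha]

end ExtragradientPlus

theorem stmt_4_general {d : ℕ} (L ρ : ℝ) (hL : 0 < L)
    (F : EuclideanSpace ℝ (Fin d) → EuclideanSpace ℝ (Fin d))
    (hLip : ∀ u v, ‖F u - F v‖ ≤ L * ‖u - v‖)
    (ustar : EuclideanSpace ℝ (Fin d))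
    (hρ : ρ < 1 / (4 * L))
    (hweak : ∀ u, (inner ℝ (F u) (u - ustar) : ℝ) ≥ -(ρ / 2) * ‖F u‖ ^ 2)
    (u ubar : ℕ → EuclideanSpace ℝ (Fin d))
    (hubar : ∀ k, ubar k = u k - (1 / L) • F (u k))
    (hnext : ∀ k, u (k + 1) = u k - (1 / (2 * L)) • F (ubar k)) :
    (∀ k : ℕ, ∃ i ≤ k, ‖F (ubar i)‖ ^ 2 ≤
      2 * L * ‖u 0 - ustar‖ ^ 2 / (((k : ℝ) + 1) * (1 / (4 * L) - ρ))) ∧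
    Filter.Tendsto (fun i => ‖F (ubar i)‖) Filter.atTop (nhds 0) := by
  have hc : 0 < 1 / (2 * L) * (1 / (4 * L) - ρ) := mul_pos (by positivity) (by linarith)
  have hdesc : ∀ k, ‖u (k + 1) - ustar‖ ^ 2
      ≤ ‖u k - ustar‖ ^ 2 - 1 / (2 * L) * (1 / (4 * L) - ρ) * ‖F (ubar k)‖ ^ 2 := by
    intro k
    have hstep := norm_sub_sq_le_of_extragradient_step hL hLip hweak
      (a := 1 / (2 * L)) (by positivity) (u k)
    rw [← hubar k, ← hnext k] at hstep
    have hrate : 1 / (2 * L) * (1 / (4 * L) - ρ) ≤ 1 / (2 * L) * (1 / L - ρ - 1 / (2 * L)) := by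
      have hhalf : 1 / L - 1 / (2 * L) = 2 * (1 / (4 * L)) := by field_simp; ring
      gcongr 1 / (2 * L) * ?_
      linarith [show 0 < 1 / (4 * L) by positivity]
    nlinarith [mul_le_mul_of_nonneg_right hrate (sq_nonneg ‖F (ubar k)‖)]
  have hdist : ∀ k, 0 ≤ ‖u k - ustar‖ ^ 2 := fun k => sq_nonneg _
  refine ⟨fun k => ?_, tendsto_norm_atTop_zero_of_summable_sq
    (summable_of_descent hc hdist (fun _ => sq_nonneg _) hdesc)⟩
  obtain ⟨i, hik, hi⟩ := exists_le_div_of_descent hc hdist hdesc k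
  refine ⟨i, hik, hi.trans_eq ?_⟩
  field_simp

theorem stmt_4 {d : ℕ} (L ρ : ℝ) (hL : 0 < L)
    (F : EuclideanSpace ℝ (Fin d) → EuclideanSpace ℝ (Fin d))
    (hLip : ∀ u v, ‖F u - F v‖ ≤ L * ‖u - v‖)
    (ustar : EuclideanSpace ℝ (Fin d)) (hzero : F ustar = 0)
    (hρ0 : 0 ≤ ρ) (hρ : ρ < 1 / (4 * L))
    (hweak : ∀ u, (inner ℝ (F u) (u - ustar) : ℝ) ≥ -(ρ / 2) * ‖F u‖ ^ 2)
    (u ubar : ℕ → EuclideanSpace ℝ (Fin d))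
    (hubar : ∀ k, ubar k = u k - (1 / L) • F (u k))
    (hnext : ∀ k, u (k + 1) = u k - (1 / (2 * L)) • F (ubar k)) :
    (∀ k : ℕ, ∃ i ≤ k, ‖F (ubar i)‖ ^ 2 ≤
      2 * L * ‖u 0 - ustar‖ ^ 2 / (((k : ℝ) + 1) * (1 / (4 * L) - ρ))) ∧
    Filter.Tendsto (fun i => ‖F (ubar i)‖) Filter.atTop (nhds 0) :=
  stmt_4_general L ρ hL F hLip ustar hρ hweak u ubar hubar hnext
end

section
/- Let F: ℝ^d → ℝ^d be an L-Lipschitz operator satisfying the weak MVI assumption at u* ∈ ℝ^d with F(u*) = 0 and parameter ρ ≥ 0. For EG+ iterates ū_k = u_k - (a_k/β)F(u_k), u_{k+1} = u_k - a_k F(ū_k) with β ∈ (0,1], a_k > 0, and for any γ > 0, the merit function h_k = a_k(⟨F(ū_k), ū_k - u*⟩ + (ρ/2)‖F(ū_k)‖²) satisfies: h_k ≤ (1/2)‖u* - u_k‖² - (1/2)‖u* - u_{k+1}‖² + (a_k/2)(ρ - a_k(1-β))‖F(ū_k)‖² + (a_k²/(2β²))(a_k L γ - β)‖F(u_k)‖²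 + (1/2)(a_k L/γ - β)‖ū_k - u_{k+1}‖². -/
/-!
Both sides are quadratic in `u_k - u*`, `F u_k` and `F ū_k`. Expanding the squared norms, the
gap between them is exactly `a_k (Lγ/2 ‖ū_k - u_k‖² + L/(2γ) ‖ū_k - u_{k+1}‖² - ⟪F ū_k - F u_k, ū_k - u_{k+1}⟫)`,
with `‖ū_k - u_k‖ = (a_k/β) ‖F u_k‖`. Cauchy–Schwarz, the Lipschitz bound and Young's inequality with
weight `γ` make this nonnegative; the `ρ` terms cancel.
-/

open scoped InnerProductSpace

section
variable {E : Type*} [NormedAddCommGroup E] [InnerProductSpace ℝ E]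

theorem real_inner_le_of_norm_le_mul {v w : E} {L r γ : ℝ} (hL : 0 ≤ L) (hγ : 0 < γ)
    (hv : ‖v‖ ≤ L * r) :
    ⟪v, w⟫_ℝ ≤ L * γ / 2 * r ^ 2 + L / (2 * γ) * ‖w‖ ^ 2 := by
  have young : r * ‖w‖ ≤ γ / 2 * r ^ 2 + 1 / (2 * γ) * ‖w‖ ^ 2 := by
    have hsq : 0 ≤ (γ * r - ‖w‖) ^ 2 / (2 * γ) := by positivity
    have expand : (γ * r - ‖w‖) ^ 2 / (2 * γ)
        = γ / 2 * r ^ 2 + 1 / (2 * γ) * ‖w‖ ^ 2 - r * ‖w‖ := by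
      field_simp
      ring
    linarith
  calc ⟪v, w⟫_ℝ ≤ ‖v‖ * ‖w‖ := real_inner_le_norm v w
    _ ≤ L * r * ‖w‖ := mul_le_mul_of_nonneg_right hv (norm_nonneg w)
    _ = L * (r * ‖w‖) := by ring
    _ ≤ L * (γ / 2 * r ^ 2 + 1 / (2 * γ) * ‖w‖ ^ 2) := mul_le_mul_of_nonneg_left young hL
    _ = L * γ / 2 * r ^ 2 + L / (2 * γ) * ‖w‖ ^ 2 := by ring

theorem extragradient_step_inner_eq {u w g gb ubar u' : E} {a β : ℝ} (hβ : β ≠ 0)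
    (hubar : ubar = u - (a / β) • g) (hu' : u' = u - a • gb) :
    a * ⟪gb, ubar - w⟫_ℝ =
      1 / 2 * ‖w - u‖ ^ 2 - 1 / 2 * ‖w - u'‖ ^ 2 - a ^ 2 * (1 - β) / 2 * ‖gb‖ ^ 2
        - a ^ 2 / (2 * β) * ‖g‖ ^ 2 - β / 2 * ‖ubar - u'‖ ^ 2 + a * ⟪gb - g, ubar - u'⟫_ℝ := by
  have hw_u' : w - u' = (w - u) + a • gb := by rw [hu']; abel
  have hubar_u' : ubar - u' = a • gb - (a / β) • g := by rw [hubar, hu']; abel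
  have hubar_w : ubar - w = -(w - u) - (a / β) • g := by rw [hubar]; abel
  rw [hw_u', hubar_u', hubar_w]
  simp only [norm_add_sq_real, norm_sub_sq_real, inner_sub_left, inner_sub_right,
    inner_neg_right, inner_smul_left, inner_smul_right, norm_smul, mul_pow, Real.norm_eq_abs,
    sq_abs, real_inner_self_eq_norm_sq, real_inner_comm gb, RCLike.conj_to_real]
  field_simp
  ring

end

theorem stmt_6_general {d : ℕ} (L ρ β γ : ℝ) (hL : 0 < L)
    (hβ0 : 0 < β) (hγ : 0 < γ)
    (F : EuclideanSpace ℝ (Fin d) → EuclideanSpace ℝ (Fin d))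
    (hLip : ∀ u v, ‖F u - F v‖ ≤ L * ‖u - v‖)
    (ustar : EuclideanSpace ℝ (Fin d))
    (a : ℕ → ℝ) (ha : ∀ k, 0 < a k)
    (u ubar : ℕ → EuclideanSpace ℝ (Fin d))
    (hubar : ∀ k, ubar k = u k - (a k / β) • F (u k))
    (hnext : ∀ k, u (k + 1) = u k - a k • F (ubar k)) (k : ℕ) :
    a k * ((inner ℝ (F (ubar k)) (ubar k - ustar) : ℝ) + (ρ / 2) * ‖F (ubar k)‖ ^ 2) ≤
      (1 / 2) * ‖ustar - u k‖ ^ 2 - (1 / 2) * ‖ustar - u (k + 1)‖ ^ 2 +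
        (a k / 2) * (ρ - a k * (1 - β)) * ‖F (ubar k)‖ ^ 2 +
        ((a k) ^ 2 / (2 * β ^ 2)) * (a k * L * γ - β) * ‖F (u k)‖ ^ 2 +
        (1 / 2) * (a k * L / γ - β) * ‖ubar k - u (k + 1)‖ ^ 2 := by
  have hstep : ‖ubar k - u k‖ = a k / β * ‖F (u k)‖ := by
    rw [hubar, sub_sub_cancel_left, norm_neg, norm_smul,
      Real.norm_of_nonneg (div_pos (ha k) hβ0).le]
  have hcross := real_inner_le_of_norm_le_mul (w := ubar k - u (k + 1)) hL.le hγ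
    ((hLip (ubar k) (u k)).trans_eq (by rw [hstep]))
  have hid := extragradient_step_inner_eq (w := ustar) hβ0.ne' (hubar k) (hnext k)
  have hβ := hβ0.ne'
  linear_combination (norm := skip) hid + mul_le_mul_of_nonneg_left hcross (ha k).le
  field_simp
  ring_nf
  exact le_rfl

theorem stmt_6 {d : ℕ} (L ρ β γ : ℝ) (hL : 0 < L) (hρ0 : 0 ≤ ρ)
    (hβ0 : 0 < β) (hβ1 : β ≤ 1) (hγ : 0 < γ)
    (F : EuclideanSpace ℝ (Fin d) → EuclideanSpace ℝ (Fin d))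
    (hLip : ∀ u v, ‖F u - F v‖ ≤ L * ‖u - v‖)
    (ustar : EuclideanSpace ℝ (Fin d)) (hzero : F ustar = 0)
    (hweak : ∀ u, (inner ℝ (F u) (u - ustar) : ℝ) ≥ -(ρ / 2) * ‖F u‖ ^ 2)
    (a : ℕ → ℝ) (ha : ∀ k, 0 < a k)
    (u ubar : ℕ → EuclideanSpace ℝ (Fin d))
    (hubar : ∀ k, ubar k = u k - (a k / β) • F (u k))
    (hnext : ∀ k, u (k + 1) = u k - a k • F (ubar k)) (k : ℕ) :
    a k * ((inner ℝ (F (ubar k)) (ubar k - ustar) : ℝ) + (ρ / 2) * ‖F (ubar k)‖ ^ 2) ≤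
      (1 / 2) * ‖ustar - u k‖ ^ 2 - (1 / 2) * ‖ustar - u (k + 1)‖ ^ 2 +
        (a k / 2) * (ρ - a k * (1 - β)) * ‖F (ubar k)‖ ^ 2 +
        ((a k) ^ 2 / (2 * β ^ 2)) * (a k * L * γ - β) * ‖F (u k)‖ ^ 2 +
        (1 / 2) * (a k * L / γ - β) * ‖ubar k - u (k + 1)‖ ^ 2 :=
  stmt_6_general L ρ β γ hL hβ0 hγ F hLip ustar a ha u ubar hubar hnext k
end
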